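/- Let T be a tree with threshold function t that admits a pervading link set with k external influencers. Then the minimum size of a pervading link set for T equals 1 + Σ_{v ∈ V(T)} (t(v) - 1). -/

import Mathlib

open Finset
open scoped Classical

/-- Threshold activation process: `act G t s j` is the set of nodes active at step `j`,
given link vector `s` (partial incentives from external influencers). -/
noncomputable def act {V : Type*} [Fintype V] (G : SimpleGraph V) (t s : V → ℕ) :
    ℕ → Finset V
  | 0 => Finset.univ.filter (fun v => t v ≤ s v)
  | (j+1) => act G t s j ∪ Finset.univ.filter
      (fun v => t v ≤ s v + ((act G t s j).filter (fun u => G.Adj u v)).card)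

/-- A link vector `s` is pervading for `(G, t)` with `k` external influencers if each node
receives at most `k` links and the process eventually activates every node. -/
def Pervading {V : Type*} [Fintype V] (G : SimpleGraph V) (t s : V → ℕ) (k : ℕ) : Prop :=
  (∀ v, s v ≤ k) ∧ ∃ j, act G t s j = Finset.univ

/-!
Orient every edge from the endpoint that becomes active first. A vertex `v` activated with `s v`
links has at least `t v - s v` earlier neighbours, so `∑ t ≤ ∑ s + |E| = ∑ s + |V| - 1`. Conversely,
for any order `π` of the vertices, `s = t - d_π` (with `d_π v` the number of earlier neighbours) is
pervading; its size is `∑ t - |E|` as soon as adjacent vertices are strictly ordered and `d_π ≤ t`,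
and it respects the cap as soon as `t ≤ k + d_π`. The activation order of any pervading vector
satisfies the last condition, and is repaired into an order satisfying all three by peeling off a
leaf `x` with neighbour `p`: the edge is oriented `x → p` (and `t p` lowered by one for the rest
of the tree) if the given order does so and `t p ≥ 2`, and `p → x` otherwise.
-/

namespace SimpleGraph

variable {V : Type*}

section Orientation

variable [Fintype V]

/-- Edges between vertices with equal `π` count for neither endpoint. -/
noncomputable def orientedInDegree (G : SimpleGraph V) (π : V → ℕ) (v : V) : ℕ :=
  #{u | G.Adj u v ∧ π u < π v}

theorem two_mul_sum_orientedInDegree_add_card_ties (G : SimpleGraph V) (π : V → ℕ) :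
    2 * ∑ v, G.orientedInDegree π v + #{q : V × V | G.Adj q.1 q.2 ∧ π q.1 = π q.2} =
      2 * #G.edgeFinset := by
  have hin : ∑ v, G.orientedInDegree π v = ∑ v, ∑ u, if G.Adj u v ∧ π u < π v then 1 else 0 :=
    sum_congr rfl fun _ _ => card_filter _ _
  have hout : (∑ v, ∑ u, if G.Adj u v ∧ π v < π u then 1 else 0) =
      ∑ v, ∑ u, if G.Adj u v ∧ π u < π v then 1 else 0 :=
    Finset.sum_comm.trans (sum_congr rfl fun _ _ => sum_congr rfl fun _ _ => by rw [G.adj_comm])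
  have hties : #{q : V × V | G.Adj q.1 q.2 ∧ π q.1 = π q.2} =
      ∑ v, ∑ u, if G.Adj u v ∧ π u = π v then 1 else 0 := by
    rw [card_filter, Fintype.sum_prod_type, Finset.sum_comm]
  have hdeg : ∑ v, G.degree v = ∑ v, ∑ u, if G.Adj u v then 1 else 0 := by
    refine sum_congr rfl fun v _ => ?_
    rw [degree, neighborFinset_eq_filter, card_filter]
    exact sum_congr rfl fun u _ => by rw [G.adj_comm]
  have hsplit : (∑ v, ∑ u, if G.Adj u v then 1 else 0) =
      (∑ v, ∑ u, if G.Adj u v ∧ π u < π v then 1 else 0) +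
      (∑ v, ∑ u, if G.Adj u v ∧ π v < π u then 1 else 0) +
      (∑ v, ∑ u, if G.Adj u v ∧ π u = π v then 1 else 0) := by
    simp only [← Finset.sum_add_distrib]
    refine sum_congr rfl fun v _ => sum_congr rfl fun u _ => ?_
    by_cases hadj : G.Adj u v
    · simp only [hadj, true_and]
      split_ifs <;> omega
    · simp [hadj]
  rw [← G.sum_degrees_eq_twice_card_edges, hdeg, hsplit, hout, hties, hin]
  ring

theorem sum_orientedInDegree_le (G : SimpleGraph V) (π : V → ℕ) :
    ∑ v, G.orientedInDegree π v ≤ #G.edgeFinset := by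
  have := G.two_mul_sum_orientedInDegree_add_card_ties π
  omega

theorem sum_orientedInDegree_eq (G : SimpleGraph V) {π : V → ℕ}
    (hπ : ∀ u v, G.Adj u v → π u ≠ π v) :
    ∑ v, G.orientedInDegree π v = #G.edgeFinset := by
  have := G.two_mul_sum_orientedInDegree_add_card_ties π
  rw [card_eq_zero.2 (filter_eq_empty_iff.2 fun q _ h => hπ _ _ h.1 h.2)] at this
  omega

theorem orientedInDegree_eq_zero_of_forall_adj (G : SimpleGraph V) {π : V → ℕ} {v : V}
    (hv : ∀ u, G.Adj u v → π v ≤ π u) : G.orientedInDegree π v = 0 :=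
  card_eq_zero.2 (filter_eq_empty_iff.2 fun u _ h => (hv u h.1).not_gt h.2)

theorem orientedInDegree_congr (G : SimpleGraph V) {π π' : V → ℕ}
    (h : ∀ u v, G.Adj u v → (π u < π v ↔ π' u < π' v)) (v : V) :
    G.orientedInDegree π v = G.orientedInDegree π' v := by
  unfold orientedInDegree
  congr 1
  exact filter_congr fun u _ => and_congr_right (h u v)

end Orientation

variable {G : SimpleGraph V} {x p : V}

theorem not_deleteEdges_adj_of_leaf (hx : ∀ u, G.Adj x u ↔ u = p) (u : V) :
    ¬(G.deleteEdges {s(x, p)}).Adj x u := by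
  rw [deleteEdges_adj, hx]
  rintro ⟨rfl, h⟩
  exact h rfl

theorem adj_ne_of_leaf (hx : ∀ u, G.Adj x u ↔ u = p) {π π' : V → ℕ}
    (hπ' : ∀ u v, (G.deleteEdges {s(x, p)}).Adj u v → π' u ≠ π' v)
    (hagree : ∀ u v, u ≠ x → v ≠ x → (π u < π v ↔ π' u < π' v)) (hxp : π x ≠ π p) :
    ∀ u v, G.Adj u v → π u ≠ π v := by
  intro u v huv
  by_cases hu : u = x
  · subst hu
    rwa [(hx v).1 huv]
  by_cases hv : v = x
  · subst hv
    rw [(hx u).1 huv.symm]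
    exact hxp.symm
  have huv' : (G.deleteEdges {s(x, p)}).Adj u v := by
    rw [deleteEdges_adj, Set.mem_singleton_iff, Sym2.eq_iff]
    tauto
  rcases (hπ' u v huv').lt_or_gt with h | h
  · exact ((hagree u v hu hv).2 h).ne
  · exact ((hagree v u hv hu).2 h).ne'

variable [Fintype V]

theorem IsAcyclic.exists_leaf_of_adj (hG : G.IsAcyclic) {a b : V} (hab : G.Adj a b) :
    ∃ x p, ∀ u, G.Adj x u ↔ u = p := by
  have : Nonempty V := ⟨a⟩
  obtain ⟨u, v, q, hq, hmax⟩ := Walk.exists_isPath_forall_isPath_length_le_length G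
  have hnil : ¬q.Nil := fun hn => by
    have := hmax a b _ (Path.singleton hab).2
    simp [hn.length_eq_zero] at this
  refine ⟨u, q.snd, fun w => ⟨fun hadj => hG.eq_snd_of_adj_start hq hadj ?_,
    fun h => h ▸ q.adj_snd hnil⟩⟩
  by_contra hw
  have := hmax _ _ _ (hq.cons (h := (hadj : G.Adj u w).symm) hw)
  simp at this

theorem orientedInDegree_eq_deleteEdges_add {a b : V} (hab : G.Adj a b) (π : V → ℕ) (v : V) :
    G.orientedInDegree π v = (G.deleteEdges {s(a, b)}).orientedInDegree π v +
      (if v = b ∧ π a < π b then 1 else 0) + (if v = a ∧ π b < π a then 1 else 0) := by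
  have hsplit : ∀ u, (if G.Adj u v ∧ π u < π v then 1 else 0) =
      (if (G.deleteEdges {s(a, b)}).Adj u v ∧ π u < π v then 1 else 0) +
      (if u = a ∧ v = b ∧ π a < π b then 1 else 0) +
      (if u = b ∧ v = a ∧ π b < π a then 1 else 0) := by
    intro u
    have := hab.ne
    by_cases h1 : u = a <;> by_cases h2 : v = b <;> by_cases h3 : u = b <;> by_cases h4 : v = a <;>
      simp_all [G.adj_comm b a]
  rw [orientedInDegree, orientedInDegree, card_filter, card_filter,
    sum_congr rfl fun u _ => hsplit u, sum_add_distrib, sum_add_distrib]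
  simp [ite_and]

theorem ncard_edgeSet_deleteEdges_lt {a b : V} (hab : G.Adj a b) :
    (G.deleteEdges {s(a, b)}).edgeSet.ncard < G.edgeSet.ncard := by
  rw [edgeSet_deleteEdges]
  exact Set.ncard_sdiff_singleton_lt_of_mem hab

theorem orientedInDegree_deleteEdges_leaf (hx : ∀ u, G.Adj x u ↔ u = p) (π : V → ℕ) :
    (G.deleteEdges {s(x, p)}).orientedInDegree π x = 0 :=
  orientedInDegree_eq_zero_of_forall_adj _ fun u h =>
    (not_deleteEdges_adj_of_leaf hx u h.symm).elim

theorem orientedInDegree_eq_of_leaf (hx : ∀ u, G.Adj x u ↔ u = p) {π π' : V → ℕ}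
    (hagree : ∀ u v, u ≠ x → v ≠ x → (π u < π v ↔ π' u < π' v)) (v : V) :
    G.orientedInDegree π v = (G.deleteEdges {s(x, p)}).orientedInDegree π' v +
      (if v = p ∧ π x < π p then 1 else 0) + (if v = x ∧ π p < π x then 1 else 0) := by
  rw [orientedInDegree_eq_deleteEdges_add ((hx p).2 rfl), orientedInDegree_congr]
  intro u w huw
  exact hagree u w (fun h => not_deleteEdges_adj_of_leaf hx w (h ▸ huw))
    (fun h => not_deleteEdges_adj_of_leaf hx u (h ▸ huw.symm))

theorem exists_order_leaf_first (hx : ∀ u, G.Adj x u ↔ u = p) {π' : V → ℕ}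
    (hπ' : ∀ u v, (G.deleteEdges {s(x, p)}).Adj u v → π' u ≠ π' v) :
    ∃ π : V → ℕ, (∀ u v, G.Adj u v → π u ≠ π v) ∧
      ∀ v, G.orientedInDegree π v = (G.deleteEdges {s(x, p)}).orientedInDegree π' v +
        if v = p then 1 else 0 := by
  have hpx : p ≠ x := ((hx p).2 rfl).ne'
  let π v := if v = x then 0 else π' v + 1
  have hagree : ∀ u v, u ≠ x → v ≠ x → (π u < π v ↔ π' u < π' v) := fun u v hu hv => by
    simp only [π, if_neg hu, if_neg hv, Nat.add_lt_add_iff_right]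
  refine ⟨π, adj_ne_of_leaf hx hπ' hagree (by simp [π, hpx]), fun v => ?_⟩
  rw [orientedInDegree_eq_of_leaf hx hagree]
  simp [π, hpx]

theorem exists_order_leaf_last (hx : ∀ u, G.Adj x u ↔ u = p) {π' : V → ℕ}
    (hπ' : ∀ u v, (G.deleteEdges {s(x, p)}).Adj u v → π' u ≠ π' v) :
    ∃ π : V → ℕ, (∀ u v, G.Adj u v → π u ≠ π v) ∧
      ∀ v, G.orientedInDegree π v = (G.deleteEdges {s(x, p)}).orientedInDegree π' v +
        if v = x then 1 else 0 := by
  have hpx : p ≠ x := ((hx p).2 rfl).ne'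
  have hsup : π' p < univ.sup π' + 1 := Nat.lt_succ_of_le (le_sup (mem_univ p))
  let π v := if v = x then univ.sup π' + 1 else π' v
  have hagree : ∀ u v, u ≠ x → v ≠ x → (π u < π v ↔ π' u < π' v) := fun u v hu hv => by
    simp only [π, if_neg hu, if_neg hv]
  refine ⟨π, adj_ne_of_leaf hx hπ' hagree (by simp [π, hpx, hsup.ne']), fun v => ?_⟩
  rw [orientedInDegree_eq_of_leaf hx hagree]
  simp [π, hpx, hsup, hsup.not_gt]

theorem orientedInDegree_leaf (hx : ∀ u, G.Adj x u ↔ u = p) (π : V → ℕ) :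
    G.orientedInDegree π x = if π p < π x then 1 else 0 := by
  have hpx : x ≠ p := (hx p).2 rfl |>.ne
  simp [orientedInDegree_eq_deleteEdges_add ((hx p).2 rfl) π x,
    orientedInDegree_deleteEdges_leaf hx, hpx]

section Feasible

variable {t : V → ℕ} {k : ℕ} {π₀ : V → ℕ}

theorem le_add_orientedInDegree_deleteEdges_of_leaf_first (hx : ∀ u, G.Adj x u ↔ u = p)
    (h₀ : ∀ v, t v ≤ k + G.orientedInDegree π₀ v) (hxp : π₀ x < π₀ p) (v : V) :
    Function.update t p (t p - 1) v ≤ k + (G.deleteEdges {s(x, p)}).orientedInDegree π₀ v := by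
  have hpx : p ≠ x := ((hx p).2 rfl).ne'
  have hv := h₀ v
  rw [orientedInDegree_eq_deleteEdges_add ((hx p).2 rfl)] at hv
  rcases eq_or_ne v p with rfl | hvp
  · simp only [Function.update_self]
    simp [hxp, hpx] at hv
    omega
  · simpa [hvp, hxp.not_gt] using hv

theorem le_add_orientedInDegree_deleteEdges_of_leaf_last (hx : ∀ u, G.Adj x u ↔ u = p)
    (h₀ : ∀ v, t v ≤ k + G.orientedInDegree π₀ v) (hk : 1 ≤ k) (hp : π₀ x < π₀ p → t p ≤ 1)
    (v : V) :
    Function.update t x 1 v ≤ k + (G.deleteEdges {s(x, p)}).orientedInDegree π₀ v := by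
  rcases eq_or_ne v x with rfl | hvx
  · simpa using hk.trans (Nat.le_add_right _ _)
  have hv := h₀ v
  rw [orientedInDegree_eq_deleteEdges_add ((hx p).2 rfl)] at hv
  rw [Function.update_of_ne hvx]
  by_cases hvp : v = p ∧ π₀ x < π₀ p
  · obtain ⟨rfl, hxp⟩ := hvp
    have := hp hxp
    omega
  · simpa [hvp, hvx] using hv

end Feasible

/-- The link vector `t - d_π` loses no edge and respects the cap `k`. -/
def IsTightOrder (G : SimpleGraph V) (t : V → ℕ) (k : ℕ) (π : V → ℕ) : Prop :=
  (∀ u v, G.Adj u v → π u ≠ π v) ∧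
    ∀ v, G.orientedInDegree π v ≤ t v ∧ t v ≤ k + G.orientedInDegree π v

section Leaf

variable {t : V → ℕ} {k : ℕ} {π' : V → ℕ}

theorem IsTightOrder.of_leaf_first (hx : ∀ u, G.Adj x u ↔ u = p)
    (h : (G.deleteEdges {s(x, p)}).IsTightOrder (Function.update t p (t p - 1)) k π')
    (hp : 1 ≤ t p) : ∃ π, G.IsTightOrder t k π := by
  obtain ⟨π, hπinj, hπ⟩ := exists_order_leaf_first hx h.1
  refine ⟨π, hπinj, fun v => ?_⟩
  have hv := h.2 v
  rw [hπ v]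
  rcases eq_or_ne v p with rfl | hvp
  · simp only [Function.update_self, if_true] at hv ⊢
    omega
  · simpa [Function.update_of_ne hvp, hvp] using hv

theorem IsTightOrder.of_leaf_last (hx : ∀ u, G.Adj x u ↔ u = p)
    (h : (G.deleteEdges {s(x, p)}).IsTightOrder (Function.update t x 1) k π')
    (hx₁ : 1 ≤ t x) (hxk : t x ≤ k + 1) : ∃ π, G.IsTightOrder t k π := by
  obtain ⟨π, hπinj, hπ⟩ := exists_order_leaf_last hx h.1
  refine ⟨π, hπinj, fun v => ?_⟩
  have hv := h.2 v
  rw [hπ v]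
  rcases eq_or_ne v x with rfl | hvx
  · simp [orientedInDegree_deleteEdges_leaf hx, hx₁, hxk]
  · simpa [Function.update_of_ne hvx, hvx] using hv

end Leaf

theorem IsAcyclic.exists_isTightOrder (hG : G.IsAcyclic) {k : ℕ} (hk : 1 ≤ k) {t : V → ℕ}
    (ht : ∀ v, 1 ≤ t v) {π₀ : V → ℕ} (h₀ : ∀ v, t v ≤ k + G.orientedInDegree π₀ v) :
    ∃ π, G.IsTightOrder t k π := by
  induction hn : G.edgeSet.ncard using Nat.strong_induction_on generalizing G t with
  | _ n ih =>
  by_cases hE : ∃ a b, G.Adj a b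
  swap
  · push Not at hE
    have hzero : ∀ π v, G.orientedInDegree π v = 0 := fun π v =>
      G.orientedInDegree_eq_zero_of_forall_adj fun u h => (hE u v h).elim
    exact ⟨π₀, fun u v h => (hE u v h).elim, fun v => by simpa [hzero] using h₀ v⟩
  obtain ⟨a, b, hab⟩ := hE
  obtain ⟨x, p, hx⟩ := hG.exists_leaf_of_adj hab
  have hxp : G.Adj x p := (hx p).2 rfl
  have hlt := hn ▸ ncard_edgeSet_deleteEdges_lt hxp
  have hG' : (G.deleteEdges {s(x, p)}).IsAcyclic := hG.anti (deleteEdges_le _)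
  by_cases hdec : π₀ x < π₀ p ∧ 2 ≤ t p
  · obtain ⟨π', hπ'⟩ := ih _ hlt hG' (t := Function.update t p (t p - 1))
      ((Function.forall_update_iff t fun _ w => 1 ≤ w).2 ⟨by omega, fun v _ => ht v⟩)
      (le_add_orientedInDegree_deleteEdges_of_leaf_first hx h₀ hdec.1) rfl
    exact hπ'.of_leaf_first hx (ht p)
  · obtain ⟨π', hπ'⟩ := ih _ hlt hG' (t := Function.update t x 1)
      ((Function.forall_update_iff t fun _ w => 1 ≤ w).2 ⟨le_rfl, fun v _ => ht v⟩)
      (le_add_orientedInDegree_deleteEdges_of_leaf_last hx h₀ hk fun h =>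
        by_contra fun hp => hdec ⟨h, by omega⟩) rfl
    have h₀x := h₀ x
    rw [orientedInDegree_leaf hx] at h₀x
    exact hπ'.of_leaf_last hx (ht x) (by split_ifs at h₀x <;> omega)

end SimpleGraph

open SimpleGraph

section Activation

variable {V : Type*} [Fintype V] (G : SimpleGraph V) (t s : V → ℕ)

theorem act_mono : Monotone (act G t s) :=
  monotone_nat_of_le_succ fun _ => subset_union_left

theorem exists_le_add_orientedInDegree_of_act_eq_univ {j : ℕ} (hj : act G t s j = univ) :
    ∃ τ : V → ℕ, ∀ v, t v ≤ s v + G.orientedInDegree τ v := by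
  have hex : ∀ v : V, ∃ n, v ∈ act G t s n := fun v => ⟨j, hj ▸ mem_univ v⟩
  refine ⟨fun v => Nat.find (hex v), fun v => ?_⟩
  have hmem : v ∈ act G t s (Nat.find (hex v)) := Nat.find_spec (hex v)
  cases hτ : Nat.find (hex v) with
  | zero =>
    rw [hτ, act, mem_filter] at hmem
    omega
  | succ m =>
    rw [hτ, act, mem_union, mem_filter] at hmem
    have hnot : v ∉ act G t s m := Nat.find_min (hex v) (by omega)
    have hact := (hmem.resolve_left hnot).2
    have hsub : {u ∈ act G t s m | G.Adj u v} ⊆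
        ({u | G.Adj u v ∧ Nat.find (hex u) < Nat.find (hex v)} : Finset V) := fun u hu => by
      rw [mem_filter] at hu ⊢
      exact ⟨mem_univ u, hu.2, hτ ▸ Nat.lt_succ_of_le (Nat.find_le hu.1)⟩
    have := card_le_card hsub
    show t v ≤ s v + #{u | G.Adj u v ∧ Nat.find (hex u) < Nat.find (hex v)}
    omega

theorem pervading_of_le_add_orientedInDegree {k : ℕ} (hs : ∀ v, s v ≤ k) {π : V → ℕ}
    (h : ∀ v, t v ≤ s v + G.orientedInDegree π v) : Pervading G t s k := by
  have key : ∀ n v, π v ≤ n → v ∈ act G t s n := by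
    intro n
    induction n with
    | zero =>
      intro v hv
      have := h v
      rw [G.orientedInDegree_eq_zero_of_forall_adj fun u _ => by omega] at this
      simpa [act] using this
    | succ m ih =>
      intro v hv
      by_cases hvm : π v ≤ m
      · exact act_mono G t s m.le_succ (ih v hvm)
      have hsub : ({u | G.Adj u v ∧ π u < π v} : Finset V) ⊆ {u ∈ act G t s m | G.Adj u v} :=
        fun u hu => by
          rw [mem_filter] at hu ⊢
          exact ⟨ih u (by omega), hu.2.1⟩
      have := card_le_card hsub
      have := h v
      rw [act, mem_union, mem_filter]
      exact Or.inr ⟨mem_univ v, by unfold orientedInDegree at *; omega⟩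
  exact ⟨hs, univ.sup π, eq_univ_of_forall fun v => key _ v (le_sup (mem_univ v))⟩

theorem one_le_of_pervading [Nonempty V] {k : ℕ} (ht : ∀ v, 1 ≤ t v)
    (h : Pervading G t s k) : 1 ≤ k := by
  obtain ⟨hs, j, hj⟩ := h
  obtain ⟨τ, hτ⟩ := exists_le_add_orientedInDegree_of_act_eq_univ G t s hj
  obtain ⟨v, hv⟩ := Finite.exists_min τ
  have := hτ v
  rw [G.orientedInDegree_eq_zero_of_forall_adj fun u _ => hv u] at this
  linarith [ht v, hs v]

theorem sum_le_sum_add_card_edgeFinset_of_pervading {k : ℕ} (h : Pervading G t s k) :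
    ∑ v, t v ≤ ∑ v, s v + #G.edgeFinset := by
  obtain ⟨τ, hτ⟩ := exists_le_add_orientedInDegree_of_act_eq_univ G t s h.2.choose_spec
  calc ∑ v, t v ≤ ∑ v, (s v + G.orientedInDegree τ v) := sum_le_sum fun v _ => hτ v
    _ ≤ ∑ v, s v + #G.edgeFinset := by
      rw [sum_add_distrib]
      exact Nat.add_le_add_left (G.sum_orientedInDegree_le τ) _

end Activation

theorem SimpleGraph.IsAcyclic.exists_pervading_sum_add_card_edgeFinset_eq {V : Type*} [Fintype V]
    [Nonempty V] {G : SimpleGraph V} (hG : G.IsAcyclic) {t : V → ℕ} {k : ℕ} (ht : ∀ v, 1 ≤ t v)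
    (hfeas : ∃ s, Pervading G t s k) :
    ∃ s, Pervading G t s k ∧ ∑ v, s v + #G.edgeFinset = ∑ v, t v := by
  obtain ⟨s₀, hs₀⟩ := hfeas
  obtain ⟨τ, hτ⟩ := exists_le_add_orientedInDegree_of_act_eq_univ G t s₀ hs₀.2.choose_spec
  obtain ⟨π, hπinj, hπ⟩ := hG.exists_isTightOrder (one_le_of_pervading G t s₀ ht hs₀) ht
    fun v => (hτ v).trans (Nat.add_le_add_right (hs₀.1 v) _)
  refine ⟨fun v => t v - G.orientedInDegree π v,
    pervading_of_le_add_orientedInDegree G t _ (π := π) (fun v => by have := (hπ v).2; omega)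
      (fun v => by omega), ?_⟩
  rw [← G.sum_orientedInDegree_eq hπinj, ← sum_add_distrib]
  exact sum_congr rfl fun v _ => Nat.sub_add_cancel (hπ v).1

theorem tree_min_links_eq {V : Type*} [Fintype V]
    (G : SimpleGraph V) (hT : G.IsTree) (t : V → ℕ) (k : ℕ)
    (ht : ∀ u, 1 ≤ t u)
    (hfeas : ∃ s, Pervading G t s k) :
    IsLeast {m : ℕ | ∃ s : V → ℕ, Pervading G t s k ∧ ∑ u, s u = m}
      (1 + ∑ u, (t u - 1)) := by
  have : Nonempty V := hT.connected.nonempty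
  have hedges := hT.card_edgeFinset
  have hsum : ∑ u, t u = ∑ u, (t u - 1) + Fintype.card V := by
    rw [Fintype.card_eq_sum_ones, ← sum_add_distrib]
    exact sum_congr rfl fun u _ => (Nat.sub_add_cancel (ht u)).symm
  refine ⟨?_, ?_⟩
  · obtain ⟨s, hs, hsum_s⟩ := hT.isAcyclic.exists_pervading_sum_add_card_edgeFinset_eq ht hfeas
    exact ⟨s, hs, by omega⟩
  · rintro m ⟨s, hs, rfl⟩
    have := sum_le_sum_add_card_edgeFinset_of_pervading G t s hs
    omega
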